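/- Let f : Matrix (Fin 3) (Fin 3) ℝ → ℝ be differentiable at R. Then the derivative at t = 0 of t ↦ f(R·exp(t·S(a))) equals tr((∂f/∂R)(R) · R · S(a)), where ∂f/∂R is the matrix of partial derivatives (∂f/∂rᵢⱼ)ᵢⱼ arranged so that the trace formula holds. -/

import Mathlib

open Matrix

attribute [local instance] Matrix.frobeniusNormedAddCommGroup Matrix.frobeniusNormedRing
  Matrix.frobeniusNormedSpace

/-- The cross-product (skew-symmetric) matrix of a vector in `ℝ³`. -/
def S (ω : Fin 3 → ℝ) : Matrix (Fin 3) (Fin 3) ℝ :=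
  !![0, -ω 2, ω 1; ω 2, 0, -ω 0; -ω 1, ω 0, 0]

/-- The scalar-by-matrix derivative `∂f/∂R`, arranged so that the trace formula holds:
`(∂f/∂R) i j` is the partial derivative of `f` with respect to the entry `r j i`. -/
noncomputable def matDeriv (f : Matrix (Fin 3) (Fin 3) ℝ → ℝ)
    (R : Matrix (Fin 3) (Fin 3) ℝ) : Matrix (Fin 3) (Fin 3) ℝ :=
  fun i j => fderiv ℝ f R (Matrix.single j i 1)

attribute [local instance] Matrix.frobeniusNormedAlgebra

theorem Matrix.linearMap_apply_eq_trace_mul {n R : Type*} [Fintype n] [DecidableEq n]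
    [CommSemiring R] (L : Matrix n n R →ₗ[R] R) (M : Matrix n n R) :
    L M = trace (of (fun i j => L (single j i 1)) * M) := by
  suffices L = traceLinearMap n R R ∘ₗ LinearMap.mulLeft R (of fun i j => L (single j i 1)) from
    congr($this M)
  refine (stdBasis R n n).ext fun ⟨i, j⟩ => ?_
  simp [stdBasis_eq_single, trace_mul_single]

theorem fderiv_apply_eq_trace_matDeriv (f : Matrix (Fin 3) (Fin 3) ℝ → ℝ)
    (R M : Matrix (Fin 3) (Fin 3) ℝ) :
    fderiv ℝ f R M = (matDeriv f R * M).trace :=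
  Matrix.linearMap_apply_eq_trace_mul (fderiv ℝ f R).toLinearMap M

theorem hasDerivAt_mul_exp_smul_zero {𝕂 𝔸 : Type*} [RCLike 𝕂] [NormedRing 𝔸]
    [NormedAlgebra 𝕂 𝔸] [CompleteSpace 𝔸] (R A : 𝔸) :
    HasDerivAt (fun t : 𝕂 => R * NormedSpace.exp (t • A)) (R * A) 0 := by
  simpa using (hasDerivAt_exp_smul_const A (0 : 𝕂)).const_mul R

theorem lie_derivative_trace_formula (f : Matrix (Fin 3) (Fin 3) ℝ → ℝ)
    (R : Matrix (Fin 3) (Fin 3) ℝ) (a : Fin 3 → ℝ)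
    (hf : DifferentiableAt ℝ f R) :
    HasDerivAt (fun t : ℝ => f (R * NormedSpace.exp (t • S a)))
      ((matDeriv f R * (R * S a)).trace) 0 := by
  rw [← fderiv_apply_eq_trace_matDeriv]
  exact hf.hasFDerivAt.comp_hasDerivAt_of_eq 0 (hasDerivAt_mul_exp_smul_zero R (S a)) (by simp)
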